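/- arXiv:2510.25569 — 2 statements merged into one kernel-verified Lean document; each statement's English description precedes it below -/
import Mathlib

section
/- Let Y = {−1, +1}, let f_1,...,f_n: X→{−1,+1} be base classifiers, let p ∈ R^n, and let N(p, I) be the n-dimensional Gaussian distribution with mean p and identity covariance. Let {p₁, p₂} be an optimal solution of the partition problem applied to p, and set p̄ = |Σ_{p∈p₁} p − Σ_{p∈p₂} p|. Then for any data distribution D over X×{−1,+1}: c_D^{N(p,I)}(h_p) ≥ 1 − Φ( p̄ / √n ), where Φ(k) = (1/2)(1 − erf(k/√2)). -/
/-!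
STATEMENT 16 (Weights partitioning lower bound -- binary Gaussian).
For base classifiers `f_i : X → {−1,+1}`, `p ∈ ℝ^n`, `N(p,I)` the Gaussian
with mean `p` and identity covariance, and `{p₁,p₂}` (encoded by `T` and `Tᶜ`)
an optimal solution of the partition problem applied to `p`, setting
`p̄ = |∑_{p∈p₁} p − ∑_{p∈p₂} p|`:
`c_D^{N(p,I)}(h_p) ≥ 1 − Φ(p̄/√n)`, where `Φ(k) = ½(1 − erf(k/√2))`.
-/

open MeasureTheory ProbabilityTheory
open scoped ENNReal

/-- Binary majority-vote loss `ℓ(h_w(x),y) = 1{y ≠ sign(w·f(x))}`. -/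
noncomputable def signLoss {X : Type*} {n : ℕ} (f : Fin n → X → ℝ)
    (w : Fin n → ℝ) (x : X) (y : ℝ) : ℝ :=
  if y * ∑ i, w i * f i x ≤ 0 then 1 else 0

/-- The Gaussian `N(p, I)` on `ℝ^n`. -/
noncomputable def gaussPi {n : ℕ} (p : Fin n → ℝ) : Measure (Fin n → ℝ) :=
  Measure.pi fun i => ProbabilityTheory.gaussianReal (p i) 1

/-- `erf(k) = (2/√π) ∫₀ᵏ e^{−t²} dt`. -/
noncomputable def erf (k : ℝ) : ℝ :=
  2 / Real.sqrt Real.pi * ∫ t in (0 : ℝ)..k, Real.exp (-t ^ 2)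

/-- `Φ(k) = ½(1 − erf(k/√2))`. -/
noncomputable def Phi (k : ℝ) : ℝ :=
  (1 - erf (k / Real.sqrt 2)) / 2

/-!
For labels and votes in `{-1, 1}` the margin `y * ∑ i, w i * f i x` equals `∑ i, s i * w i` with
signs `s i = y * f i x`, so under `w ~ N(p, I)` it is a Gaussian of variance `n` and mean
`m = y * ∑ i, p i * f i x`; the expected loss at `(x, y)` is therefore the standard normal cdf at
`-m / √n`, and `1 - Phi` is that cdf. The mean `m` is itself a partition difference, for the set
`{i | s i = 1}`, so on the conditioning event `m ≤ 0` optimality of `T` gives `p̄ ≤ |m| = -m`.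
The cdf being monotone, the bound holds pointwise and survives integration.
-/

open Real Set
open scoped NNReal

lemma gaussianReal_zero_real_Iic_zero {v : ℝ≥0} (hv : v ≠ 0) :
    (gaussianReal 0 v).real (Iic 0) = 1 / 2 := by
  have hsymm : (gaussianReal 0 v).real (Ici 0) = (gaussianReal 0 v).real (Iic 0) := by
    conv_lhs => rw [← neg_zero, ← gaussianReal_map_neg]
    rw [map_measureReal_apply measurable_neg measurableSet_Ici]
    congr 1; ext x; simp
  have := nullSingletonClass_gaussianReal (μ := 0) hv
  have hunion := measureReal_union_add_inter (μ := gaussianReal 0 v) (s := Iic 0)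
    (measurableSet_Ici (a := 0))
  rw [Iic_union_Ici, Iic_inter_Ici, Icc_self, measureReal_def _ {0}, measure_singleton,
    ENNReal.toReal_zero, probReal_univ, hsymm] at hunion
  linarith

lemma integral_gaussianPDFReal_zero_one_eq_erf (k : ℝ) :
    ∫ t in (0 : ℝ)..k, gaussianPDFReal 0 1 t = erf (k / √2) / 2 := by
  have hpdf (t : ℝ) : gaussianPDFReal 0 1 t = (√(2 * π))⁻¹ * exp (-(t / √2) ^ 2) := by
    rw [gaussianPDFReal, div_pow, sq_sqrt zero_le_two]
    simp [neg_div]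
  simp_rw [hpdf, intervalIntegral.integral_const_mul,
    intervalIntegral.integral_comp_div (fun u => exp (-u ^ 2)) (sqrt_ne_zero'.2 zero_lt_two),
    zero_div, erf, smul_eq_mul, sqrt_mul zero_le_two]
  field_simp

lemma cdf_gaussianReal_zero_one_eq_one_sub_Phi (k : ℝ) :
    cdf (gaussianReal 0 1) k = 1 - Phi k := by
  have hIic (a : ℝ) : (gaussianReal 0 1).real (Iic a) = ∫ t in Iic a, gaussianPDFReal 0 1 t := by
    rw [measureReal_def, gaussianReal_apply_eq_integral _ one_ne_zero,
      ENNReal.toReal_ofReal (integral_nonneg fun _ => gaussianPDFReal_nonneg _ _ _)]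
  have hint := (integrable_gaussianPDFReal 0 1).integrableOn (s := Iic (0:ℝ))
  have hdiff := intervalIntegral.integral_Iic_sub_Iic hint
    ((integrable_gaussianPDFReal 0 1).integrableOn (s := Iic k))
  rw [← hIic, ← hIic, gaussianReal_zero_real_Iic_zero one_ne_zero,
    integral_gaussianPDFReal_zero_one_eq_erf] at hdiff
  rw [cdf_eq_real, Phi]
  linarith

lemma map_finsetSum_mul_pi_gaussianReal {ι : Type*} [Fintype ι] (c m : ι → ℝ) (v : ι → ℝ≥0)
    (s : Finset ι) :
    (Measure.pi fun i => gaussianReal (m i) (v i)).map (fun w => ∑ i ∈ s, c i * w i)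
      = gaussianReal (∑ i ∈ s, c i * m i) (∑ i ∈ s, .mk (c i ^ 2) (sq_nonneg _) * v i) := by
  classical
  set P := Measure.pi fun i => gaussianReal (m i) (v i)
  have hindep : iIndepFun (fun i (w : ι → ℝ) => c i * w i) P :=
    iIndepFun_pi (X := fun i (x : ℝ) => c i * x) fun i => by fun_prop
  have hmap (i : ι) : P.map (fun w => c i * w i)
      = gaussianReal (c i * m i) (.mk (c i ^ 2) (sq_nonneg _) * v i) := by
    rw [← gaussianReal_map_const_mul,
      ← (measurePreserving_eval (fun i => gaussianReal (m i) (v i)) i).map_eq,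
      Measure.map_map (by fun_prop) (by fun_prop)]
    rfl
  induction s using Finset.induction_on with
  | empty => simp [gaussianReal_zero_var]
  | insert j s hj ih =>
    have hsplit : (fun w : ι → ℝ => ∑ i ∈ insert j s, c i * w i)
        = (∑ i ∈ s, fun w : ι → ℝ => c i * w i) + fun w => c j * w j := by
      ext w; simp [Finset.sum_insert hj, add_comm]
    rw [← Finset.sum_fn] at ih
    rw [hsplit, gaussianReal_add_gaussianReal_of_indepFun
      (hindep.indepFun_finsetSum_of_notMem (fun i => by fun_prop) hj) ih (hmap j),
      Finset.sum_insert hj, Finset.sum_insert hj, add_comm, add_comm (_ * v j)]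

lemma gaussianReal_real_Iic_zero_eq_cdf (m : ℝ) {v : ℝ≥0} (hv : v ≠ 0) :
    (gaussianReal m v).real (Iic 0) = cdf (gaussianReal 0 1) (-m / √v) := by
  have hsqrt : 0 < √(v : ℝ) := sqrt_pos.2 (NNReal.coe_pos.2 (pos_iff_ne_zero.2 hv))
  have hstd : (gaussianReal 0 1).map (fun x => √v * x + m) = gaussianReal m v := by
    rw [show (fun x => √v * x + m) = (· + m) ∘ (√v * ·) from rfl,
      ← Measure.map_map (measurable_add_const m) (measurable_const_mul _),
      gaussianReal_map_const_mul, gaussianReal_map_add_const]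
    congr
    · ring
    · ext; simp [sq_sqrt v.coe_nonneg]
  rw [← hstd, map_measureReal_apply (by fun_prop) measurableSet_Iic, cdf_eq_real]
  congr 1
  ext x
  simp only [mem_preimage, mem_Iic, le_div_iff₀ hsqrt]
  constructor <;> intro h <;> linarith

lemma gaussPi_real_setOf_sum_mul_nonpos {n : ℕ} (hn : 0 < n) (p s : Fin n → ℝ)
    (hs : ∀ i, s i = 1 ∨ s i = -1) :
    (gaussPi p).real {w | ∑ i, s i * w i ≤ 0}
      = cdf (gaussianReal 0 1) (-(∑ i, s i * p i) / √n) := by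
  have hvar : ∑ i, NNReal.mk (s i ^ 2) (sq_nonneg _) * 1 = n := by
    ext
    have hsq (i : Fin n) : s i ^ 2 = 1 := by rcases hs i with h | h <;> simp [h]
    simp [hsq]
  have hmap := map_finsetSum_mul_pi_gaussianReal s p (fun _ => 1) Finset.univ
  rw [hvar] at hmap
  have hcdf := gaussianReal_real_Iic_zero_eq_cdf (∑ i, s i * p i) (v := n) (by positivity)
  rw [NNReal.coe_natCast] at hcdf
  rw [← hcdf, ← hmap, map_measureReal_apply (by fun_prop) measurableSet_Iic]
  rfl

lemma mul_eq_one_or_eq_neg_one {a b : ℝ} (ha : a = 1 ∨ a = -1) (hb : b = 1 ∨ b = -1) :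
    a * b = 1 ∨ a * b = -1 := by
  rcases ha with rfl | rfl <;> rcases hb with rfl | rfl <;> norm_num

lemma integral_signLoss_gaussPi {X : Type*} {n : ℕ} (hn : 0 < n) (f : Fin n → X → ℝ)
    (p : Fin n → ℝ) {x : X} {y : ℝ} (hf : ∀ i, f i x = 1 ∨ f i x = -1) (hy : y = 1 ∨ y = -1) :
    ∫ w, signLoss f w x y ∂(gaussPi p)
      = cdf (gaussianReal 0 1) (-(y * ∑ i, p i * f i x) / √n) := by
  have hs (i : Fin n) := mul_eq_one_or_eq_neg_one hy (hf i)
  have hmargin (w : Fin n → ℝ) : y * ∑ i, w i * f i x = ∑ i, y * f i x * w i := by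
    rw [Finset.mul_sum]; congr 1; ext i; ring
  have hloss : (fun w => signLoss f w x y)
      = {w : Fin n → ℝ | ∑ i, y * f i x * w i ≤ 0}.indicator 1 := by
    ext w
    simp only [signLoss, hmargin, indicator_apply, mem_ofPred_eq, Pi.one_apply]
  rw [hloss, integral_indicator_one (measurableSet_le (by fun_prop) (by fun_prop)),
    gaussPi_real_setOf_sum_mul_nonpos hn p _ hs, ← hmargin]

lemma exists_finset_sum_sub_sum_compl_eq {ι : Type*} [Fintype ι] [DecidableEq ι] (p s : ι → ℝ)
    (hs : ∀ i, s i = 1 ∨ s i = -1) :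
    ∃ T : Finset ι, ∑ i ∈ T, p i - ∑ i ∈ Tᶜ, p i = ∑ i, s i * p i := by
  refine ⟨Finset.univ.filter (s · = 1), ?_⟩
  rw [Finset.compl_filter, ← Finset.sum_filter_add_sum_filter_not Finset.univ (s · = 1),
    sub_eq_add_neg, ← Finset.sum_neg_distrib]
  congr 1 <;> refine Finset.sum_congr rfl fun i hi => ?_ <;> rw [Finset.mem_filter] at hi
  · rw [hi.2, one_mul]
  · rw [(hs i).resolve_left hi.2, neg_one_mul]

lemma abs_sum_sub_sum_compl_le_neg_margin {X : Type*} {n : ℕ} (f : Fin n → X → ℝ)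
    (p : Fin n → ℝ) (T : Finset (Fin n))
    (hT : ∀ T' : Finset (Fin n),
      |(∑ i ∈ T, p i) - ∑ i ∈ Tᶜ, p i| ≤ |(∑ i ∈ T', p i) - ∑ i ∈ T'ᶜ, p i|)
    {x : X} {y : ℝ} (hf : ∀ i, f i x = 1 ∨ f i x = -1) (hy : y = 1 ∨ y = -1)
    (hloss : y * ∑ i, p i * f i x ≤ 0) :
    |(∑ i ∈ T, p i) - ∑ i ∈ Tᶜ, p i| ≤ -(y * ∑ i, p i * f i x) := by
  have hs (i : Fin n) := mul_eq_one_or_eq_neg_one hy (hf i)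
  obtain ⟨T', hT'⟩ := exists_finset_sum_sub_sum_compl_eq p (fun i => y * f i x) hs
  have hmargin : ∑ i, y * f i x * p i = y * ∑ i, p i * f i x := by
    rw [Finset.mul_sum]; congr 1; ext i; ring
  calc _ ≤ |(∑ i ∈ T', p i) - ∑ i ∈ T'ᶜ, p i| := hT T'
    _ = -(y * ∑ i, p i * f i x) := by rw [hT', hmargin, abs_of_nonpos hloss]

theorem binary_gaussian_partition_lower_bound
    {X : Type*} [MeasurableSpace X]
    {n : ℕ} (hn : 0 < n) (f : Fin n → X → ℝ)
    (hf : ∀ i x, f i x = 1 ∨ f i x = -1)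
    (hfm : ∀ i, Measurable (f i))
    (p : Fin n → ℝ)
    (T : Finset (Fin n))
    (hT : ∀ T' : Finset (Fin n),
      |(∑ i ∈ T, p i) - ∑ i ∈ Tᶜ, p i| ≤ |(∑ i ∈ T', p i) - ∑ i ∈ T'ᶜ, p i|)
    (D : Measure (X × ℝ)) [IsProbabilityMeasure D]
    (hD : ∀ᵐ z ∂D, z.2 = 1 ∨ z.2 = -1)
    (hpos1 : D {z | signLoss f p z.1 z.2 = 1} ≠ 0) :
    1 - Phi (|(∑ i ∈ T, p i) - ∑ i ∈ Tᶜ, p i| / Real.sqrt n)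
      ≤ ∫ z, (∫ w, signLoss f w z.1 z.2 ∂(gaussPi p))
          ∂(D[|{z | signLoss f p z.1 z.2 = 1}]) := by
  set S := {z : X × ℝ | signLoss f p z.1 z.2 = 1}
  set margin : X × ℝ → ℝ := fun z => z.2 * ∑ i, p i * f i z.1
  have hmargin : Measurable margin := by fun_prop
  have hS : S = margin ⁻¹' Iic 0 := by
    ext z; simp [S, margin, signLoss]
  have := cond_isProbabilityMeasure (μ := D) hpos1
  have hcondS : ∀ᵐ z ∂D[|S], z ∈ S := ae_cond_mem (hS ▸ hmargin measurableSet_Iic)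
  have hcondD : ∀ᵐ z ∂D[|S], z.2 = 1 ∨ z.2 = -1 := cond_absolutelyContinuous.ae_le hD
  set G : X × ℝ → ℝ := fun z => cdf (gaussianReal 0 1) (-margin z / √n)
  have hG : Integrable G D[|S] := by
    refine .of_bound ((cdf _).mono.measurable.comp (hmargin.neg.div_const _)).aestronglyMeasurable 1
      (ae_of_all _ fun z => ?_)
    rw [Real.norm_of_nonneg (cdf_nonneg _ _)]
    exact cdf_le_one _ _
  rw [integral_congr_ae (g := G) (by
    filter_upwards [hcondD] with z hz using integral_signLoss_gaussPi hn f p (hf · z.1) hz),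
    ← cdf_gaussianReal_zero_one_eq_one_sub_Phi]
  calc _ = ∫ _, cdf (gaussianReal 0 1) (|(∑ i ∈ T, p i) - ∑ i ∈ Tᶜ, p i| / √n) ∂D[|S] := by
        simp
    _ ≤ ∫ z, G z ∂D[|S] := integral_mono_ae (integrable_const _) hG ?_
  filter_upwards [hcondS, hcondD] with z hzS hz
  rw [hS] at hzS
  exact (cdf _).mono (div_le_div_of_nonneg_right
    (abs_sum_sub_sum_compl_le_neg_margin f p T hT (hf · z.1) hz hzS) (sqrt_nonneg _))
end

section
/- Let Y = {−1, +1}, let f_1,...,f_n: X→{−1,+1} be base classifiers, let p ∈ R^n, and let N(p, I) be the n-dimensional Gaussian distribution with mean p and identity covariance. Then for any data distribution D over X×{−1,+1}: b_D^{N(p,I)}(h_p) ≥ Φ( ||p||₁ / √n ), where ||p||₁ = Σ_i |p_i| and Φ(k) = (1/2)(1 − erf(k/√2)). -/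
open MeasureTheory ProbabilityTheory
open scoped ENNReal

/-!
For fixed `(x, y)` put `cᵢ = y fᵢ(x) ∈ {±1}`. Under `w ~ N(p, I)` the margin `∑ cᵢ wᵢ` is a sum of
independent Gaussians, hence `N(∑ cᵢ pᵢ, n)`, so the vote errs on `(x, y)` with probability
`Φ((∑ cᵢ pᵢ)/√n) ≥ Φ(‖p‖₁/√n)`, because `Φ(k) = P(Z ≥ k)` for a standard normal `Z` is antitone
and `∑ cᵢ pᵢ ≤ ‖p‖₁`. This pointwise bound survives averaging over any conditional distribution
of `(x, y)`.
-/

open Real Set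
open scoped NNReal

namespace ProbabilityTheory

lemma map_finsetSum_eq_gaussianReal {ι Ω : Type*} [MeasurableSpace Ω] {P : Measure Ω}
    [IsProbabilityMeasure P] {X : ι → Ω → ℝ} {m : ι → ℝ} {v : ι → ℝ≥0}
    (hX : iIndepFun X P) (hmeas : ∀ i, Measurable (X i))
    (hlaw : ∀ i, P.map (X i) = gaussianReal (m i) (v i)) (s : Finset ι) :
    P.map (∑ i ∈ s, X i) = gaussianReal (∑ i ∈ s, m i) (∑ i ∈ s, v i) := by
  classical
  induction s using Finset.induction_on with
  | empty => simp [Pi.zero_def, gaussianReal_zero_var]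
  | insert i s hi ih =>
    rw [Finset.sum_insert hi, Finset.sum_insert hi, Finset.sum_insert hi]
    exact gaussianReal_add_gaussianReal_of_indepFun
      (hX.indepFun_finsetSum_of_notMem hmeas hi).symm (hlaw i) ih

lemma map_pi_gaussianReal_sum_mul {ι : Type*} [Fintype ι] (c m : ι → ℝ) (v : ι → ℝ≥0) :
    (Measure.pi fun i => gaussianReal (m i) (v i)).map (fun w => ∑ i, c i * w i)
      = gaussianReal (∑ i, c i * m i) (∑ i, ‖c i‖₊ ^ 2 * v i) := by
  have hsum : (fun w : ι → ℝ => ∑ i, c i * w i) = ∑ i, fun w => c i * w i := by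
    ext w; simp
  rw [hsum]
  refine map_finsetSum_eq_gaussianReal (iIndepFun_pi (X := fun i x => c i * x)
    fun i => by fun_prop) (fun i => by fun_prop) (fun i => ?_) _
  change Measure.map ((c i * ·) ∘ fun w : ι → ℝ => w i) _ = _
  rw [← Measure.map_map (measurable_const_mul (c i)) (measurable_pi_apply i),
    (measurePreserving_eval _ i).map_eq]
  convert gaussianReal_map_const_mul (μ := m i) (v := v i) (c i) using 2
  exact NNReal.eq (by simp)

end ProbabilityTheory

lemma gaussianReal_real_Ici (a : ℝ) : (gaussianReal 0 2⁻¹).real (Ici a) = (1 - erf a) / 2 := by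
  have hpdf : ∀ x, gaussianPDFReal 0 2⁻¹ x = (√π)⁻¹ * exp (-x ^ 2) := by
    intro x
    rw [gaussianPDFReal, sub_zero, NNReal.coe_inv, NNReal.coe_ofNat,
      show 2 * π * 2⁻¹ = π by ring, show 2 * (2 : ℝ)⁻¹ = 1 by norm_num, div_one]
  have hint : Integrable (fun x => exp (-x ^ 2)) := by
    simpa using integrable_exp_neg_mul_sq one_pos
  have hIoi := intervalIntegral.integral_Ioi_sub_Ioi' (a := 0) (b := a) hint.integrableOn
    hint.integrableOn
  have hhalf : ∫ x in Ioi (0 : ℝ), exp (-x ^ 2) = √π / 2 := by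
    simpa using integral_gaussian_Ioi 1
  rw [measureReal_def, gaussianReal_apply_eq_integral _ (by norm_num),
    ENNReal.toReal_ofReal (setIntegral_nonneg measurableSet_Ici
      fun x _ => gaussianPDFReal_nonneg _ _ x),
    setIntegral_congr_set Ioi_ae_eq_Ici.symm]
  simp only [hpdf]
  rw [integral_const_mul, erf, ← hIoi, hhalf]
  field_simp
  ring

lemma Phi_eq_gaussianReal_real (k : ℝ) : Phi k = (gaussianReal 0 2⁻¹).real (Ici (k / √2)) :=
  (gaussianReal_real_Ici _).symm

lemma Phi_antitone : Antitone Phi := fun a b hab => by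
  rw [Phi_eq_gaussianReal_real, Phi_eq_gaussianReal_real]
  exact measureReal_mono (Ici_subset_Ici.2 (by gcongr))

lemma gaussianReal_real_Iic_zero (m : ℝ) {v : ℝ≥0} (hv : v ≠ 0) :
    (gaussianReal m v).real (Iic 0) = Phi (m / √v) := by
  set c := √(2 * v) with hc
  have hc_pos : 0 < c := by positivity
  have hmap : (gaussianReal m v).map (fun x => (m - x) / c) = gaussianReal 0 2⁻¹ := by
    change Measure.map ((· / c) ∘ (m - ·)) _ = _
    rw [← Measure.map_map (measurable_div_const c) (measurable_const_sub m),
      gaussianReal_map_const_sub, gaussianReal_map_div_const, sub_self, zero_div]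
    congr 1
    refine NNReal.eq ?_
    simp only [NNReal.coe_div, NNReal.coe_mk, hc, Real.sq_sqrt (by positivity : (0 : ℝ) ≤ 2 * v),
      NNReal.coe_inv, NNReal.coe_ofNat]
    field_simp
  have hpre : (fun x => (m - x) / c) ⁻¹' Ici (m / c) = Iic 0 := by
    ext x
    simp [div_le_div_iff_of_pos_right hc_pos]
  have harg : m / √v / √2 = m / c := by
    rw [hc, Real.sqrt_mul zero_le_two, div_div, mul_comm]
  rw [Phi_eq_gaussianReal_real, harg, ← hmap,
    map_measureReal_apply (by fun_prop) measurableSet_Ici, hpre]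

instance isProbabilityMeasure_gaussPi {n : ℕ} (p : Fin n → ℝ) :
    IsProbabilityMeasure (gaussPi p) := by
  rw [gaussPi]; infer_instance

lemma gaussPi_real_sum_mul_nonpos {n : ℕ} (hn : n ≠ 0) (p c : Fin n → ℝ)
    (hc : ∀ i, |c i| = 1) :
    (gaussPi p).real {w | ∑ i, c i * w i ≤ 0} = Phi ((∑ i, c i * p i) / √n) := by
  have hvar : ∑ i, ‖c i‖₊ ^ 2 * (1 : ℝ≥0) = n := by
    simp [← NNReal.coe_inj, hc]
  rw [show {w : Fin n → ℝ | ∑ i, c i * w i ≤ 0} = (fun w => ∑ i, c i * w i) ⁻¹' Iic 0 from rfl,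
    ← map_measureReal_apply (by fun_prop) measurableSet_Iic, gaussPi,
    map_pi_gaussianReal_sum_mul, hvar, gaussianReal_real_Iic_zero _ (by exact_mod_cast hn),
    NNReal.coe_natCast]

section signLoss

variable {X : Type*} {n : ℕ} (f : Fin n → X → ℝ)

lemma signLoss_eq_indicator (w : Fin n → ℝ) (x : X) (y : ℝ) :
    signLoss f w x y = {w : Fin n → ℝ | ∑ i, (y * f i x) * w i ≤ 0}.indicator 1 w := by
  simp only [signLoss, Set.indicator_apply, Set.mem_ofPred_eq, Pi.one_apply, Finset.mul_sum]
  simp only [mul_comm, mul_left_comm]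

lemma measurable_signLoss [MeasurableSpace X] (hf : ∀ i, Measurable (f i)) :
    Measurable fun q : (X × ℝ) × (Fin n → ℝ) => signLoss f q.2 q.1.1 q.1.2 := by
  refine Measurable.ite (measurableSet_le ?_ measurable_const) measurable_const measurable_const
  fun_prop

lemma norm_integral_signLoss_le_one (μ : Measure (Fin n → ℝ)) [IsProbabilityMeasure μ]
    (x : X) (y : ℝ) : ‖∫ w, signLoss f w x y ∂μ‖ ≤ 1 := by
  simpa using norm_integral_le_of_norm_le_const (μ := μ) (C := 1)
    (f := fun w => signLoss f w x y)
    (.of_forall fun w => by unfold signLoss; split_ifs <;> norm_num)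

lemma Phi_le_integral_signLoss (hn : n ≠ 0) (p : Fin n → ℝ) {x : X} {y : ℝ} (hy : |y| = 1)
    (hfx : ∀ i, |f i x| = 1) :
    Phi ((∑ i, |p i|) / √n) ≤ ∫ w, signLoss f w x y ∂gaussPi p := by
  have hc : ∀ i, |y * f i x| = 1 := fun i => by rw [abs_mul, hy, hfx, one_mul]
  have hsum : ∑ i, y * f i x * p i ≤ ∑ i, |p i| := Finset.sum_le_sum fun i _ =>
    (le_abs_self _).trans (by rw [abs_mul, hc, one_mul])
  simp only [signLoss_eq_indicator]
  rw [integral_indicator_one (measurableSet_le (by fun_prop) measurable_const),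
    gaussPi_real_sum_mul_nonpos hn p _ hc]
  exact Phi_antitone (by gcongr)

end signLoss

theorem binary_gaussian_maximizing_lower_bound
    {X : Type*} [MeasurableSpace X]
    {n : ℕ} (hn : 0 < n) (f : Fin n → X → ℝ)
    (hf : ∀ i x, f i x = 1 ∨ f i x = -1)
    (hfm : ∀ i, Measurable (f i))
    (p : Fin n → ℝ)
    (D : Measure (X × ℝ)) [IsProbabilityMeasure D]
    (hD : ∀ᵐ z ∂D, z.2 = 1 ∨ z.2 = -1)
    (hpos0 : D {z | signLoss f p z.1 z.2 = 0} ≠ 0) :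
    Phi ((∑ i, |p i|) / Real.sqrt n)
      ≤ ∫ z, (∫ w, signLoss f w z.1 z.2 ∂(gaussPi p))
          ∂(D[|{z | signLoss f p z.1 z.2 = 0}]) := by
  set μ := D[|{z | signLoss f p z.1 z.2 = 0}]
  have : IsProbabilityMeasure μ := cond_isProbabilityMeasure hpos0
  have hmeas : StronglyMeasurable fun z : X × ℝ => ∫ w, signLoss f w z.1 z.2 ∂gaussPi p :=
    (measurable_signLoss f hfm).stronglyMeasurable.integral_prod_right'
  have hint : Integrable (fun z : X × ℝ => ∫ w, signLoss f w z.1 z.2 ∂gaussPi p) μ :=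
    .of_bound hmeas.aestronglyMeasurable 1
      (.of_forall fun z => norm_integral_signLoss_le_one f _ z.1 z.2)
  have hbound : ∀ᵐ z ∂μ, Phi ((∑ i, |p i|) / √n) ≤ ∫ w, signLoss f w z.1 z.2 ∂gaussPi p := by
    filter_upwards [cond_absolutelyContinuous.ae_le hD] with z hz
    exact Phi_le_integral_signLoss f hn.ne' p ((abs_eq zero_le_one).2 hz)
      fun i => (abs_eq zero_le_one).2 (hf i z.1)
  simpa using integral_mono_ae (integrable_const _) hint hbound
end
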